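/- arXiv:2109.01448 — 6 statements merged into one kernel-verified Lean document; each statement's English description precedes it below -/
import Mathlib

section
/- Let d ≥ 2 and let f : ℝ^d → ℝ be continuously differentiable. Assume that for every p ∈ ℝ^d the matrix p ⊗ ∇f(p) is symmetric. Then ∇f(p) is parallel to p for every p, and f is rotation invariant: f(R p) = f(p) for every p ∈ ℝ^d and every R ∈ SO(d). -/
/-!
The symmetry `p i * ∂ⱼ f p = p j * ∂ᵢ f p` says that `∇f(p)` is parallel to `p`, so `Df(p)` kills
every vector orthogonal to `p`. Hence `f` is constant along each great circle
`t ↦ cos t • x + sin t • w` with `w ⊥ x`, `|w| = |x|`. Every `y` with `|y| = |x|` lies on such a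
circle (for `y = -x` this needs a vector orthogonal to `x`, i.e. `d ≥ 2`), so `f` is constant on
spheres centred at the origin, and these are preserved by orthogonal matrices.
-/

open scoped BigOperators

/-- Euclidean gradient of a scalar function on `ℝ^d`. -/
noncomputable def grad {d : ℕ} (f : (Fin d → ℝ) → ℝ) (y : Fin d → ℝ) : Fin d → ℝ :=
  fun i => fderiv ℝ f y (Pi.single i 1)

open Matrix Real

section VecMulVec

variable {R ι : Type*} [CommRing R] [Fintype ι] {p g : ι → R}

theorem not_linearIndependent_of_isSymm_vecMulVec [Nontrivial R] (h : (vecMulVec p g).IsSymm) :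
    ¬ LinearIndependent R ![p, g] := by
  intro hli
  rw [LinearIndependent.pair_iff] at hli
  by_cases hg : g = 0
  · exact one_ne_zero (hli 0 1 (by simp [hg])).2
  obtain ⟨i₀, hi₀⟩ := Function.ne_iff.mp hg
  refine hi₀ (hli (g i₀) (-p i₀) (funext fun j => ?_)).1
  have := h.apply i₀ j
  simp only [vecMulVec_apply] at this
  simp only [Pi.add_apply, Pi.smul_apply, smul_eq_mul, Pi.zero_apply]
  linear_combination this

theorem dotProduct_eq_zero_of_isSymm_vecMulVec [NoZeroDivisors R] (h : (vecMulVec p g).IsSymm)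
    (hp : p ≠ 0) {v : ι → R} (hv : p ⬝ᵥ v = 0) : v ⬝ᵥ g = 0 := by
  obtain ⟨i₀, hi₀⟩ := Function.ne_iff.mp hp
  refine (mul_eq_zero.mp ?_).resolve_left hi₀
  calc p i₀ * (v ⬝ᵥ g) = ∑ i, v i * (p i * g i₀) := by
        simp only [dotProduct, Finset.mul_sum]
        refine Finset.sum_congr rfl fun i _ => ?_
        have := h.apply i₀ i
        simp only [vecMulVec_apply] at this
        linear_combination -v i * this
    _ = (p ⬝ᵥ v) * g i₀ := by
        simp only [dotProduct, Finset.sum_mul]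
        exact Finset.sum_congr rfl fun i _ => by ring
    _ = 0 := by rw [hv, zero_mul]

end VecMulVec

theorem mulVec_dotProduct_mulVec_self_of_transpose_mul_self {n R : Type*} [Fintype n]
    [DecidableEq n] [CommSemiring R] {A : Matrix n n R} (hA : Aᵀ * A = 1) (p : n → R) :
    A *ᵥ p ⬝ᵥ A *ᵥ p = p ⬝ᵥ p := by
  rw [dotProduct_mulVec, vecMul_mulVec, hA, vecMul_one]

theorem fderiv_apply_eq_dotProduct_grad {d : ℕ} (f : (Fin d → ℝ) → ℝ) (p v : Fin d → ℝ) :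
    fderiv ℝ f p v = v ⬝ᵥ grad f p := by
  conv_lhs => rw [pi_eq_sum_univ' v]
  simp [dotProduct, grad]

section Sphere

variable {ι : Type*} [Fintype ι] {f : (ι → ℝ) → ℝ}

theorem dotProduct_self_pos {x : ι → ℝ} (hx : x ≠ 0) : 0 < x ⬝ᵥ x :=
  (Finset.sum_nonneg fun i _ => mul_self_nonneg (x i)).lt_of_ne'
    (mt dotProduct_self_eq_zero.mp hx)

theorem apply_cos_smul_add_sin_smul_eq (hf : Differentiable ℝ f)
    (htan : ∀ p v, p ≠ 0 → p ⬝ᵥ v = 0 → fderiv ℝ f p v = 0)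
    {x w : ι → ℝ} (hx : x ≠ 0) (hxw : x ⬝ᵥ w = 0) (hw : w ⬝ᵥ w = x ⬝ᵥ x) (t : ℝ) :
    f (cos t • x + sin t • w) = f x := by
  set γ : ℝ → ι → ℝ := fun t => cos t • x + sin t • w
  have hwx : w ⬝ᵥ x = 0 := by rw [dotProduct_comm, hxw]
  have hγ' : ∀ t, HasDerivAt γ (-sin t • x + cos t • w) t := fun t =>
    ((hasDerivAt_cos t).smul_const x).add ((hasDerivAt_sin t).smul_const w)
  have hγ_dot : ∀ t, γ t ⬝ᵥ γ t = x ⬝ᵥ x := fun t => by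
    simp only [γ, add_dotProduct, dotProduct_add, smul_dotProduct, dotProduct_smul, smul_eq_mul,
      hxw, hwx, hw]
    linear_combination (x ⬝ᵥ x) * sin_sq_add_cos_sq t
  have hγ_tangent : ∀ t, γ t ⬝ᵥ (-sin t • x + cos t • w) = 0 := fun t => by
    simp only [γ, add_dotProduct, dotProduct_add, smul_dotProduct, dotProduct_smul, smul_eq_mul,
      hxw, hwx, hw]
    ring
  have hderiv : ∀ t, HasDerivAt (f ∘ γ) 0 t := fun t => by
    have hγ0 : γ t ≠ 0 := fun h =>
      hx (dotProduct_self_eq_zero.mp (by simpa [h] using (hγ_dot t).symm))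
    have := (hf (γ t)).hasFDerivAt.comp_hasDerivAt t (hγ' t)
    rwa [htan _ _ hγ0 (hγ_tangent t)] at this
  simpa [γ] using is_const_of_deriv_eq_zero (f := f ∘ γ) (fun t => (hderiv t).differentiableAt)
    (fun t => (hderiv t).deriv) t 0

theorem exists_eq_smul_add_smul_orthogonal [Nontrivial ι] {x : ι → ℝ} (hx : x ≠ 0) (y : ι → ℝ) :
    ∃ (w : ι → ℝ) (α β : ℝ), x ⬝ᵥ w = 0 ∧ w ⬝ᵥ w = x ⬝ᵥ x ∧ 0 ≤ β ∧ y = α • x + β • w := by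
  obtain ⟨z, hz0, hxz, α, b, hb, hy⟩ :
      ∃ z, z ≠ 0 ∧ x ⬝ᵥ z = 0 ∧ ∃ α b : ℝ, 0 ≤ b ∧ y = α • x + b • z := by
    set α := (x ⬝ᵥ y) / (x ⬝ᵥ x)
    have hxu : x ⬝ᵥ (y - α • x) = 0 := by
      simp only [dotProduct_sub, dotProduct_smul, smul_eq_mul, α]
      field_simp [(dotProduct_self_pos hx).ne']
      ring
    by_cases hu : y - α • x = 0
    · obtain ⟨z, hz0, hzx⟩ := exists_ne_zero_dotProduct_eq_zero x
      exact ⟨z, hz0, by rwa [dotProduct_comm], α, 0, le_rfl, by simpa [sub_eq_zero] using hu⟩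
    · exact ⟨y - α • x, hu, hxu, α, 1, zero_le_one, by simp⟩
  set c := √(x ⬝ᵥ x / z ⬝ᵥ z)
  have hc : 0 < c := sqrt_pos.mpr (div_pos (dotProduct_self_pos hx) (dotProduct_self_pos hz0))
  refine ⟨c • z, α, b / c, by simp [hxz], ?_, div_nonneg hb hc.le, ?_⟩
  · simp only [smul_dotProduct, dotProduct_smul, smul_eq_mul, ← mul_assoc]
    rw [mul_self_sqrt (div_nonneg (dotProduct_self_pos hx).le (dotProduct_self_pos hz0).le),
      div_mul_cancel₀ _ (dotProduct_self_pos hz0).ne']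
  · rw [hy, smul_smul, div_mul_cancel₀ _ hc.ne']

theorem apply_eq_of_dotProduct_self_eq [Nontrivial ι] (hf : Differentiable ℝ f)
    (htan : ∀ p v, p ≠ 0 → p ⬝ᵥ v = 0 → fderiv ℝ f p v = 0)
    {x y : ι → ℝ} (h : y ⬝ᵥ y = x ⬝ᵥ x) : f y = f x := by
  rcases eq_or_ne x 0 with rfl | hx
  · rw [show y = 0 by simpa using h]
  obtain ⟨w, α, β, hxw, hw, hβ, rfl⟩ := exists_eq_smul_add_smul_orthogonal hx y
  have hαβ : α ^ 2 + β ^ 2 = 1 := by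
    refine mul_right_cancel₀ (dotProduct_self_pos hx).ne' ?_
    simp only [add_dotProduct, dotProduct_add, smul_dotProduct, dotProduct_smul, smul_eq_mul,
      hxw, dotProduct_comm w x, hw] at h
    linear_combination h
  have hcos : cos (arccos α) = α := cos_arccos (by nlinarith) (by nlinarith)
  have hsin : sin (arccos α) = β := by
    rw [sin_arccos, ← sqrt_sq hβ]
    congr 1
    linarith
  simpa [hcos, hsin] using apply_cos_smul_add_sin_smul_eq hf htan hx hxw hw (arccos α)

end Sphere

/-- if `p ⊗ ∇f(p)` is symmetric for every `p`, then `∇f(p)` is parallel to `p`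
for every `p`, and `f` is invariant under `SO(d)`. -/
theorem stmt2 (d : ℕ) (hd : 2 ≤ d) (f : (Fin d → ℝ) → ℝ) (hf : ContDiff ℝ 1 f)
    (hsym : ∀ p : Fin d → ℝ,
      (Matrix.of fun i j : Fin d => p i * grad f p j).IsSymm) :
    (∀ p : Fin d → ℝ, ¬ LinearIndependent ℝ ![p, grad f p]) ∧
    (∀ (p : Fin d → ℝ) (R : Matrix (Fin d) (Fin d) ℝ),
      R ∈ Matrix.specialOrthogonalGroup (Fin d) ℝ → f (R.mulVec p) = f p) := by
  have htan : ∀ p v : Fin d → ℝ, p ≠ 0 → p ⬝ᵥ v = 0 → fderiv ℝ f p v = 0 := fun p v hp hv => by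
    rw [fderiv_apply_eq_dotProduct_grad]
    exact dotProduct_eq_zero_of_isSymm_vecMulVec (hsym p) hp hv
  have : Nontrivial (Fin d) := Fin.nontrivial_iff_two_le.mpr hd
  refine ⟨fun p => not_linearIndependent_of_isSymm_vecMulVec (hsym p), fun p R hR => ?_⟩
  exact apply_eq_of_dotProduct_self_eq (hf.differentiable one_ne_zero) htan
    (mulVec_dotProduct_mulVec_self_of_transpose_mul_self
      ((mem_orthogonalGroup_iff' _ _).mp hR.1) p)
end

section
/- Let N be a real d×d matrix, let 1 ≤ p ≤ d, and let I = (i_1 < … < i_p) and J = (j_1 < … < j_p) be strictly increasing p-tuples in {1,…,d}. Then the map t ↦ det( (exp(tN))_{I,J} ), the p×p minor of exp(tN) with rows I and columns J, is differentiable at t = 0 and its derivative there equals: (a) ∑_{i ∈ I} N_{ii} if I = J; (b) (−1)^q N_{ij} if the sets I and J differ in exactly one element, writing I = K ∪ {i}, J = K ∪ {j} with K = I ∩ J of cardinality p−1 and i ≠ j, where q is the number of indices k ∈ K lying strictly between i and j; (c) 0 if I and J differ in at least two elements. -/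
/-! At `t = 0` the matrix `exp (t • N)` equals `1` and has derivative `N`, so by multilinearity of
the determinant in the rows, the derivative of the minor is `∑ a, det` of `1_{I,J}` with row `a`
replaced by row `a` of `N_{I,J}`. Expanding along that row, each complementary minor is a minor of
the identity with strictly increasing index tuples, hence `1` if `I ∖ {I a} = J ∖ {J b}` and `0`
otherwise. The derivative is therefore the sum of `(-1)^(a+b) N (I a) (J b)` over such pairs
`(a, b)`: the diagonal pairs when `I = J`, no pair when `I` and `J` differ in two elements, and the
single pair `(i, j)` in the remaining case. There `a + b` counts the elements of `K` below `i` plus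
those below `j`, which has the parity of the number of elements of `K` between `i` and `j`. -/

open Finset Matrix

-- `exp` is differentiated in the `ℓ∞` operator norm, which induces the product topology on
-- `Matrix`.
theorem Matrix.hasDerivAt_exp_smul_zero {𝕂 m : Type*} [RCLike 𝕂] [Fintype m] [DecidableEq m]
    (N : Matrix m m 𝕂) : HasDerivAt (fun t : 𝕂 => NormedSpace.exp (t • N)) N 0 := by
  let _ := Matrix.linftyOpNormedRing (n := m) (α := 𝕂)
  let _ := Matrix.linftyOpNormedAlgebra (n := m) (R := 𝕂) (α := 𝕂)
  have : @CompleteSpace (Matrix m m 𝕂) PseudoMetricSpace.toUniformSpace :=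
    FiniteDimensional.complete 𝕂 _
  have h := hasDerivAt_exp_smul_const (𝕂 := 𝕂) N 0
  rw [zero_smul, NormedSpace.exp_zero, one_mul] at h
  exact h

theorem HasDerivAt.matrix_submatrix {𝕜 m n l o : Type*} [NontriviallyNormedField 𝕜]
    [Fintype m] [Fintype n] [Fintype l] [Fintype o] {M : 𝕜 → Matrix m n 𝕜} {M' : Matrix m n 𝕜}
    {x : 𝕜} (hM : HasDerivAt M M' x) (f : l → m) (g : o → n) :
    HasDerivAt (fun t => (M t).submatrix f g) (M'.submatrix f g) x :=
  hasDerivAt_pi.2 fun a => hasDerivAt_pi.2 fun b =>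
    hasDerivAt_pi.1 (hasDerivAt_pi.1 hM (f a)) (g b)

theorem Matrix.hasDerivAt_det {𝕜 n : Type*} [NontriviallyNormedField 𝕜] [Fintype n]
    [DecidableEq n] {M : 𝕜 → Matrix n n 𝕜} {M' : Matrix n n 𝕜} {x : 𝕜}
    (hM : HasDerivAt M M' x) :
    HasDerivAt (fun t => (M t).det) (∑ i, ((M x).updateRow i (M' i)).det) x := by
  let det : ContinuousMultilinearMap 𝕜 (fun _ : n => n → 𝕜) 𝕜 :=
    ⟨Matrix.detRowAlternating.toMultilinearMap, continuous_id.matrix_det⟩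
  refine ((det.hasFDerivAt (M x)).comp_hasDerivAt x hM).congr_deriv ?_
  exact det.linearDeriv_apply (M x) M'

theorem Finset.image_comp_succAbove {α : Type*} [DecidableEq α] {m : ℕ} {f : Fin (m + 1) → α}
    (hf : Function.Injective f) (a : Fin (m + 1)) :
    image (f ∘ a.succAbove) univ = (image f univ).erase (f a) := by
  rw [← image_image, Fin.image_succAbove_univ, ← image_erase hf, erase_eq, compl_eq_univ_sdiff]

theorem Matrix.det_one_submatrix_of_strictMono {R α : Type*} [CommRing R] [LinearOrder α] {m : ℕ}
    {f g : Fin m → α} (hf : StrictMono f) (hg : StrictMono g) :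
    ((1 : Matrix α α R).submatrix f g).det = if image f univ = image g univ then 1 else 0 := by
  split_ifs with h
  · have hfg : f = g := (hf.range_inj hg).1 (by simpa [Set.ext_iff, Finset.ext_iff] using h)
    rw [hfg, submatrix_one _ hg.injective, det_one]
  · obtain ⟨c, hc⟩ : ∃ c, g c ∉ image f univ := by
      by_contra! hsub
      refine h (eq_of_subset_of_card_le (fun y hy => ?_) ?_).symm
      · obtain ⟨c, -, rfl⟩ := mem_image.1 hy
        exact hsub c
      · rw [card_image_of_injective _ hf.injective, card_image_of_injective _ hg.injective]
    refine det_eq_zero_of_column_eq_zero c fun a => ?_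
    rw [submatrix_apply, one_apply_ne]
    intro hac
    exact hc (hac ▸ mem_image_of_mem f (mem_univ a))

theorem Matrix.hasDerivAt_det_submatrix_exp_smul {𝕂 α : Type*} [RCLike 𝕂] [Fintype α]
    [LinearOrder α] (N : Matrix α α 𝕂) {m : ℕ} {I J : Fin (m + 1) → α} (hI : StrictMono I)
    (hJ : StrictMono J) :
    HasDerivAt (fun t : 𝕂 => ((NormedSpace.exp (t • N)).submatrix I J).det)
      (∑ a, ∑ b, if (image I univ).erase (I a) = (image J univ).erase (J b) then
        (-1) ^ (a + b : ℕ) * N (I a) (J b) else 0) 0 := by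
  refine (hasDerivAt_det ((hasDerivAt_exp_smul_zero N).matrix_submatrix I J)).congr_deriv ?_
  refine sum_congr rfl fun a _ => ?_
  rw [zero_smul, NormedSpace.exp_zero, det_succ_row _ a]
  refine sum_congr rfl fun b _ => ?_
  rw [submatrix_updateRow_succAbove, submatrix_submatrix,
    det_one_submatrix_of_strictMono (hI.comp (Fin.strictMono_succAbove a))
      (hJ.comp (Fin.strictMono_succAbove b)),
    image_comp_succAbove hI.injective, image_comp_succAbove hJ.injective]
  split_ifs <;> simp

theorem Finset.sdiff_subset_singleton_of_erase_eq_erase {α : Type*} [DecidableEq α]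
    {s t : Finset α} {x y : α} (h : s.erase x = t.erase y) : s \ t ⊆ {x} := by
  intro z hz
  obtain ⟨hzs, hzt⟩ := mem_sdiff.1 hz
  by_contra hzx
  exact hzt (mem_of_mem_erase (h ▸ mem_erase.2 ⟨mem_singleton.not.1 hzx, hzs⟩))

theorem Finset.erase_eq_erase_iff_of_sdiff_eq_singleton {α : Type*} [DecidableEq α]
    {s t : Finset α} {i j x y : α} (hs : s \ t = {i}) (ht : t \ s = {j}) :
    s.erase x = t.erase y ↔ x = i ∧ y = j := by
  constructor
  · intro h
    have hx := sdiff_subset_singleton_of_erase_eq_erase h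
    have hy := sdiff_subset_singleton_of_erase_eq_erase h.symm
    rw [hs, singleton_subset_singleton] at hx
    rw [ht, singleton_subset_singleton] at hy
    exact ⟨hx.symm, hy.symm⟩
  · rintro ⟨rfl, rfl⟩
    rw [erase_eq, erase_eq, ← hs, ← ht, sdiff_sdiff_right_self, sdiff_sdiff_right_self, inf_comm]

theorem Finset.card_filter_lt_of_strictMono {α : Type*} [LinearOrder α] {m : ℕ}
    {f : Fin m → α} (hf : StrictMono f) (a : Fin m) : #{x ∈ image f univ | x < f a} = a := by
  rw [filter_image, card_image_of_injective _ hf.injective]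
  simp_rw [hf.lt_iff_lt]
  rw [← Fin.card_Iio]
  congr 1
  ext; simp

theorem Finset.filter_lt_inter_of_sdiff_eq_singleton {α : Type*} [LinearOrder α]
    {s t : Finset α} {i : α} (hs : s \ t = {i}) : {x ∈ s ∩ t | x < i} = {x ∈ s | x < i} := by
  ext x
  simp only [mem_filter, mem_inter]
  refine ⟨fun ⟨⟨hxs, _⟩, hxi⟩ => ⟨hxs, hxi⟩, fun ⟨hxs, hxi⟩ => ⟨⟨hxs, ?_⟩, hxi⟩⟩
  by_contra hxt
  have : x ∈ s \ t := mem_sdiff.2 ⟨hxs, hxt⟩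
  rw [hs, mem_singleton] at this
  exact hxi.ne this

theorem Finset.card_filter_lt_eq_add {α : Type*} [LinearOrder α] {K : Finset α} {i j : α}
    (hi : i ∉ K) (hij : i ≤ j) :
    #{k ∈ K | k < j} = #{k ∈ K | k < i} + #{k ∈ K | i < k ∧ k < j} := by
  rw [← card_union_of_disjoint]
  · congr 1
    ext k
    simp only [mem_filter, mem_union]
    constructor
    · rintro ⟨hk, hkj⟩
      rcases lt_trichotomy k i with hki | rfl | hik
      exacts [Or.inl ⟨hk, hki⟩, absurd hk hi, Or.inr ⟨hk, hik, hkj⟩]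
    · rintro (⟨hk, hki⟩ | ⟨hk, -, hkj⟩)
      exacts [⟨hk, hki.trans_le hij⟩, ⟨hk, hkj⟩]
  · exact disjoint_filter.2 fun k _ hki hk => hki.not_gt hk.1

theorem Finset.neg_one_pow_card_filter_lt_add {R α : Type*} [Monoid R] [HasDistribNeg R]
    [LinearOrder α] {K : Finset α} {i j : α} (hi : i ∉ K) (hj : j ∉ K) :
    (-1 : R) ^ (#{k ∈ K | k < i} + #{k ∈ K | k < j}) =
      (-1) ^ #{k ∈ K | min i j < k ∧ k < max i j} := by
  rcases le_total i j with hij | hji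
  · rw [min_eq_left hij, max_eq_right hij, card_filter_lt_eq_add hi hij, ← add_assoc,
      ← two_mul, pow_add, pow_mul, neg_one_sq, one_pow, one_mul]
  · rw [min_eq_right hji, max_eq_left hji, card_filter_lt_eq_add hj hji, add_right_comm,
      ← two_mul, pow_add, pow_mul, neg_one_sq, one_pow, one_mul]

theorem stmt5_general (d p : ℕ) (hp : 1 ≤ p)
    (N : Matrix (Fin d) (Fin d) ℝ)
    (I J : Fin p → Fin d) (hI : StrictMono I) (hJ : StrictMono J) :
    -- (a)
    (I = J →
      HasDerivAt (fun t : ℝ => ((NormedSpace.exp (t • N)).submatrix I J).det)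
        (∑ a : Fin p, N (I a) (I a)) 0) ∧
    -- (b)
    (∀ i j : Fin d, i ≠ j →
      (Finset.image I Finset.univ) \ (Finset.image J Finset.univ) = {i} →
      (Finset.image J Finset.univ) \ (Finset.image I Finset.univ) = {j} →
      HasDerivAt (fun t : ℝ => ((NormedSpace.exp (t • N)).submatrix I J).det)
        ((-1 : ℝ) ^
            (((Finset.image I Finset.univ) ∩ (Finset.image J Finset.univ)).filter
              (fun k => min i j < k ∧ k < max i j)).card
          * N i j) 0) ∧
    -- (c)
    (2 ≤ ((Finset.image I Finset.univ) \ (Finset.image J Finset.univ)).card →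
      HasDerivAt (fun t : ℝ => ((NormedSpace.exp (t • N)).submatrix I J).det) 0 0) := by
  obtain ⟨m, rfl⟩ : ∃ m, p = m + 1 := ⟨p - 1, by omega⟩
  have hD := Matrix.hasDerivAt_det_submatrix_exp_smul N hI hJ
  refine ⟨fun hIJ => ?_, fun i j _ hIJ hJI => ?_, fun h2 => ?_⟩
  · subst hIJ
    refine hD.congr_deriv ?_
    simp [erase_inj _ (mem_image_of_mem I (mem_univ _)), hI.injective.eq_iff]
  · have hi : i ∈ image I univ \ image J univ := hIJ ▸ mem_singleton_self i
    have hj : j ∈ image J univ \ image I univ := hJI ▸ mem_singleton_self j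
    obtain ⟨a₀, -, rfl⟩ := mem_image.1 (mem_sdiff.1 hi).1
    obtain ⟨b₀, -, rfl⟩ := mem_image.1 (mem_sdiff.1 hj).1
    have ha₀ : #{k ∈ image I univ ∩ image J univ | k < I a₀} = a₀ := by
      rw [filter_lt_inter_of_sdiff_eq_singleton hIJ, card_filter_lt_of_strictMono hI]
    have hb₀ : #{k ∈ image I univ ∩ image J univ | k < J b₀} = b₀ := by
      rw [inter_comm, filter_lt_inter_of_sdiff_eq_singleton hJI, card_filter_lt_of_strictMono hJ]
    refine hD.congr_deriv ?_
    simp only [erase_eq_erase_iff_of_sdiff_eq_singleton hIJ hJI, hI.injective.eq_iff,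
      hJ.injective.eq_iff, ite_and, ← ite_sum_zero, Fintype.sum_ite_eq']
    rw [← ha₀, ← hb₀, neg_one_pow_card_filter_lt_add (fun h => (mem_sdiff.1 hi).2 (mem_inter.1 h).2)
      (fun h => (mem_sdiff.1 hj).2 (mem_inter.1 h).1)]
  · refine hD.congr_deriv (sum_eq_zero fun a _ => sum_eq_zero fun b _ => if_neg fun h => ?_)
    have := card_le_card (sdiff_subset_singleton_of_erase_eq_erase h)
    rw [card_singleton] at this
    omega

/-- derivative at `t = 0` of the `p×p` minor `det((exp tN)_{I,J})` of the matrix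
exponential, for strictly increasing row and column tuples `I, J`:
(a) `∑_{i∈I} N_{ii}` if `I = J`; (b) `(−1)^q N_{ij}` if the sets `I` and `J` differ in exactly
one element, with `I = K ∪ {i}`, `J = K ∪ {j}`, `K = I ∩ J`, `q` the number of `k ∈ K` strictly
between `i` and `j`; (c) `0` if they differ in at least two elements. -/
theorem stmt5 (d p : ℕ) (hp : 1 ≤ p) (hpd : p ≤ d)
    (N : Matrix (Fin d) (Fin d) ℝ)
    (I J : Fin p → Fin d) (hI : StrictMono I) (hJ : StrictMono J) :
    -- (a)
    (I = J →
      HasDerivAt (fun t : ℝ => ((NormedSpace.exp (t • N)).submatrix I J).det)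
        (∑ a : Fin p, N (I a) (I a)) 0) ∧
    -- (b)
    (∀ i j : Fin d, i ≠ j →
      (Finset.image I Finset.univ) \ (Finset.image J Finset.univ) = {i} →
      (Finset.image J Finset.univ) \ (Finset.image I Finset.univ) = {j} →
      HasDerivAt (fun t : ℝ => ((NormedSpace.exp (t • N)).submatrix I J).det)
        ((-1 : ℝ) ^
            (((Finset.image I Finset.univ) ∩ (Finset.image J Finset.univ)).filter
              (fun k => min i j < k ∧ k < max i j)).card
          * N i j) 0) ∧
    -- (c)
    (2 ≤ ((Finset.image I Finset.univ) \ (Finset.image J Finset.univ)).card →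
      HasDerivAt (fun t : ℝ => ((NormedSpace.exp (t • N)).submatrix I J).det) 0 0) :=
  stmt5_general d p hp N I J hI hJ
end

section
/- Let n ≥ 1 and let L : (0,∞) × ℝ^n → ℝ (variables (ρ, q)) be such that q ↦ L(ρ, q) is continuously differentiable for each ρ. For m = (ρ, q) ∈ (0,∞) × ℝ^n, let T′(ρ, q) be the (1+n)×(1+n) matrix whose first row is (ρ, qᵀ), whose entries for i, j ≥ 1 with i ≠ j are q_j (∂L/∂q_i)(ρ, q), whose first column below the corner is T′_{j0} = ρ (∂L/∂q_j)(ρ, q) for j ≥ 1, and whose diagonal entries for i ≥ 1 are L + q_i ∂L/∂q_i − m·∂L/∂m. Then T′(ρ, q) is symmetric for every (ρ, q) ∈ (0,∞) × ℝ^n if and only if ρ ∇_q L(ρ, q) = q for all (ρ, q), which holds if and only if there exists a function g : (0,∞) → ℝ such that L(ρ, q) = |q|²/(2ρ) + g(ρ) for all (ρ, q). -/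
open scoped BigOperators

/-- Partial gradient `∂L/∂q` of `L(ρ, q)` with respect to `q`. -/
noncomputable def gradq {n : ℕ} (L : ℝ × (Fin n → ℝ) → ℝ) (ρ : ℝ) (q : Fin n → ℝ) :
    Fin n → ℝ :=
  fun i => fderiv ℝ (fun q' => L (ρ, q')) q (Pi.single i 1)

/-- The partial derivative `∂L/∂ρ`. -/
noncomputable def dLdρ {n : ℕ} (L : ℝ × (Fin n → ℝ) → ℝ) (ρ : ℝ) (q : Fin n → ℝ) : ℝ :=
  deriv (fun r => L (r, q)) ρ

/-- The tensor `T′` of gas dynamics: the second-form Euler–Lagrange tensor with its first row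
replaced by the conserved field `m = (ρ, q)`.  Rows and columns are indexed by
`Fin 1 ⊕ Fin n ≃ Fin (1+n)`, `Sum.inl` being the time index `0`. -/
noncomputable def Tgas {n : ℕ} (L : ℝ × (Fin n → ℝ) → ℝ) (ρ : ℝ) (q : Fin n → ℝ) :
    Matrix (Fin 1 ⊕ Fin n) (Fin 1 ⊕ Fin n) ℝ :=
  Matrix.fromBlocks
    (Matrix.of fun _ _ : Fin 1 => ρ)
    (Matrix.of fun _ j => q j)
    (Matrix.of fun i _ => ρ * gradq L ρ q i)
    (Matrix.of fun i j =>
      if i = j then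
        L (ρ, q) + q i * gradq L ρ q i
          - (ρ * dLdρ L ρ q + ∑ k, q k * gradq L ρ q k)
      else q j * gradq L ρ q i)

/-!
The `(0, i)` and `(i, 0)` entries of `T′` are `q i` and `ρ ∂L/∂q_i`, so symmetry forces
`ρ ∇_q L = q`; conversely, with `∂L/∂q_i = q_i / ρ` the spatial block `q_j q_i / ρ` is
symmetric. Finally `ρ ∇_q L = q` says exactly that `L(ρ, ·) - |q|² / (2ρ)` has vanishing
derivative, hence is a function of `ρ` alone.
-/

theorem ContinuousLinearMap.pi_ext_single {ι R M : Type*} [Finite ι] [DecidableEq ι]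
    [CommSemiring R] [TopologicalSpace R] [AddCommMonoid M] [TopologicalSpace M] [Module R M]
    {φ ψ : (ι → R) →L[R] M} (h : ∀ i, φ (Pi.single i 1) = ψ (Pi.single i 1)) : φ = ψ :=
  ContinuousLinearMap.coe_injective <| LinearMap.pi_ext fun i x => by
    simp only [ContinuousLinearMap.coe_coe]
    rw [← mul_one x, ← smul_eq_mul, Pi.single_smul', map_smul, map_smul, h]

theorem eq_of_fderiv_apply_single_eq {ι G : Type*} [Fintype ι] [DecidableEq ι]
    [NormedAddCommGroup G] [NormedSpace ℝ G] {f g : (ι → ℝ) → G}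
    (hf : Differentiable ℝ f) (hg : Differentiable ℝ g)
    (h : ∀ x i, fderiv ℝ f x (Pi.single i 1) = fderiv ℝ g x (Pi.single i 1))
    (h₀ : f 0 = g 0) : f = g :=
  eq_of_fderiv_eq hf hg (fun x => ContinuousLinearMap.pi_ext_single (h x)) 0 h₀

theorem hasFDerivAt_sum_sq_div {ι : Type*} [Fintype ι] (ρ : ℝ) (q : ι → ℝ) :
    HasFDerivAt (fun q : ι → ℝ => (∑ k, q k ^ 2) / (2 * ρ))
      (∑ k, (q k / ρ) • (ContinuousLinearMap.proj k : (ι → ℝ) →L[ℝ] ℝ)) q := by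
  have h := HasFDerivAt.fun_sum (u := Finset.univ) (A := fun k (q : ι → ℝ) => q k ^ 2)
    fun k _ => (hasFDerivAt_apply (𝕜 := ℝ) (F' := fun _ => ℝ) k q).pow 2
  simp only [div_eq_inv_mul]
  refine (h.const_mul (2 * ρ)⁻¹).congr_fderiv ?_
  ext v
  simp [Finset.mul_sum, mul_assoc, mul_left_comm]

theorem fderiv_sum_sq_div_add_const_apply_single {ι : Type*} [Fintype ι] [DecidableEq ι]
    (ρ c : ℝ) (q : ι → ℝ) (i : ι) :
    fderiv ℝ (fun q : ι → ℝ => (∑ k, q k ^ 2) / (2 * ρ) + c) q (Pi.single i 1) = q i / ρ := by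
  rw [fderiv_add_const, (hasFDerivAt_sum_sq_div ρ q).fderiv]
  simp [Pi.single_apply]

theorem differentiable_sum_sq_div_add_const {ι : Type*} [Fintype ι] (ρ c : ℝ) :
    Differentiable ℝ (fun q : ι → ℝ => (∑ k, q k ^ 2) / (2 * ρ) + c) :=
  fun q => (hasFDerivAt_sum_sq_div ρ q).differentiableAt.add_const c

section GasDynamics

variable {n : ℕ} {L : ℝ × (Fin n → ℝ) → ℝ} {ρ : ℝ}

theorem Tgas_isSymm_iff (hρ : ρ ≠ 0) (q : Fin n → ℝ) :
    (Tgas L ρ q).IsSymm ↔ ∀ i, ρ * gradq L ρ q i = q i := by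
  constructor
  · intro h i
    simpa [Tgas] using h.apply (Sum.inl 0) (Sum.inr i)
  · intro h
    have hgrad : ∀ i, gradq L ρ q i = q i / ρ := fun i => by
      rw [eq_div_iff hρ, mul_comm, h]
    refine Matrix.IsSymm.ext ?_
    rintro (_ | i) (_ | j)
    · simp [Tgas]
    · simpa [Tgas] using h j
    · simpa [Tgas] using (h i).symm
    · by_cases hij : i = j
      · simp [Tgas, hij]
      · simp only [Tgas, Matrix.fromBlocks_apply₂₂, Matrix.of_apply, if_neg hij,
          if_neg (Ne.symm hij), hgrad]
        ring

theorem forall_mul_gradq_eq_iff (hρ : ρ ≠ 0) (hL : Differentiable ℝ fun q => L (ρ, q)) :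
    (∀ q i, ρ * gradq L ρ q i = q i) ↔
      ∀ q, L (ρ, q) = (∑ i, q i ^ 2) / (2 * ρ) + L (ρ, 0) := by
  constructor
  · intro h
    refine congrFun (eq_of_fderiv_apply_single_eq hL
      (differentiable_sum_sq_div_add_const ρ _) (fun q i => ?_) (by simp))
    rw [fderiv_sum_sq_div_add_const_apply_single, eq_div_iff hρ, mul_comm]
    exact h q i
  · intro h q i
    have hfun : (fun q => L (ρ, q)) = fun q => (∑ i, q i ^ 2) / (2 * ρ) + L (ρ, 0) := funext h
    rw [gradq, hfun, fderiv_sum_sq_div_add_const_apply_single, mul_div_cancel₀ _ hρ]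

end GasDynamics

theorem stmt9_general (n : ℕ) (L : ℝ × (Fin n → ℝ) → ℝ)
    (hL : ∀ ρ : ℝ, 0 < ρ → ContDiff ℝ 1 (fun q : Fin n → ℝ => L (ρ, q))) :
    ((∀ (ρ : ℝ) (q : Fin n → ℝ), 0 < ρ → (Tgas L ρ q).IsSymm) ↔
      (∀ (ρ : ℝ) (q : Fin n → ℝ), 0 < ρ → ∀ i, ρ * gradq L ρ q i = q i)) ∧
    ((∀ (ρ : ℝ) (q : Fin n → ℝ), 0 < ρ → (Tgas L ρ q).IsSymm) ↔
      (∃ g : ℝ → ℝ, ∀ (ρ : ℝ) (q : Fin n → ℝ), 0 < ρ →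
        L (ρ, q) = (∑ i, q i ^ 2) / (2 * ρ) + g ρ)) := by
  have hsymm : (∀ (ρ : ℝ) (q : Fin n → ℝ), 0 < ρ → (Tgas L ρ q).IsSymm) ↔
      ∀ (ρ : ℝ) (q : Fin n → ℝ), 0 < ρ → ∀ i, ρ * gradq L ρ q i = q i :=
    forall_congr' fun ρ => forall_congr' fun q => imp_congr_right fun hρ =>
      Tgas_isSymm_iff hρ.ne' q
  have hdiff : ∀ ρ : ℝ, 0 < ρ → Differentiable ℝ fun q : Fin n → ℝ => L (ρ, q) :=
    fun ρ hρ => (hL ρ hρ).differentiable one_ne_zero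
  refine ⟨hsymm, hsymm.trans ⟨fun h => ?_, ?_⟩⟩
  · exact ⟨fun ρ => L (ρ, 0), fun ρ q hρ =>
      (forall_mul_gradq_eq_iff hρ.ne' (hdiff ρ hρ)).1 (h ρ · hρ) q⟩
  · rintro ⟨g, hg⟩ ρ q hρ
    have hg₀ : g ρ = L (ρ, 0) := by simpa using (hg ρ 0 hρ).symm
    exact (forall_mul_gradq_eq_iff hρ.ne' (hdiff ρ hρ)).2 (fun q => hg₀ ▸ hg ρ q hρ) q

/-- `T′(ρ,q)` is symmetric for all `ρ > 0, q` iff `ρ ∇_q L = q`, iff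
`L(ρ,q) = |q|²/(2ρ) + g(ρ)` for some function `g`. -/
theorem stmt9 (n : ℕ) (hn : 1 ≤ n) (L : ℝ × (Fin n → ℝ) → ℝ)
    (hL : ∀ ρ : ℝ, 0 < ρ → ContDiff ℝ 1 (fun q : Fin n → ℝ => L (ρ, q))) :
    ((∀ (ρ : ℝ) (q : Fin n → ℝ), 0 < ρ → (Tgas L ρ q).IsSymm) ↔
      (∀ (ρ : ℝ) (q : Fin n → ℝ), 0 < ρ → ∀ i, ρ * gradq L ρ q i = q i)) ∧
    ((∀ (ρ : ℝ) (q : Fin n → ℝ), 0 < ρ → (Tgas L ρ q).IsSymm) ↔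
      (∃ g : ℝ → ℝ, ∀ (ρ : ℝ) (q : Fin n → ℝ), 0 < ρ →
        L (ρ, q) = (∑ i, q i ^ 2) / (2 * ρ) + g ρ)) :=
  stmt9_general n L hL
end

section
/- Let c > 0 and Λ = diag(−c², 1, 1, 1) ∈ M₄(ℝ). Let m₊, m₋, ν ∈ ℝ⁴ and set ρ±² := −m±ᵀ Λ m±. Assume the Rankine–Hugoniot conditions of the limit case L = ρ²: (i) m₊·ν = m₋·ν (Euclidean inner product), and (ii) 2( m₊ (m₊·ν) − m₋ (m₋·ν) ) + (ρ₊² − ρ₋²) Λ⁻¹ ν = 0. If ρ₊² ≠ ρ₋², then νᵀ Λ⁻¹ ν = 0, i.e. the discontinuity propagates at light speed in its normal direction. -/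
open Matrix

/-- Rankine–Hugoniot conditions for the limit case `L = ρ²` of relativistic
gas dynamics.  If `[m·ν] = 0` and `2[m (m·ν)] + [ρ²] Λ⁻¹ν = 0` with `[ρ²] ≠ 0`, then
`νᵀ Λ⁻¹ ν = 0`: the discontinuity propagates at light speed in its normal direction. -/
theorem stmt11 (c : ℝ) (hc : 0 < c)
    (Λ : Matrix (Fin 4) (Fin 4) ℝ) (hΛ : Λ = Matrix.diagonal ![-c ^ 2, 1, 1, 1])
    (mp mm ν : Fin 4 → ℝ)
    (ρp2 ρm2 : ℝ) (hρp : ρp2 = -(mp ⬝ᵥ Λ.mulVec mp)) (hρm : ρm2 = -(mm ⬝ᵥ Λ.mulVec mm))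
    (h1 : mp ⬝ᵥ ν = mm ⬝ᵥ ν)
    (h2 : (2 : ℝ) • ((mp ⬝ᵥ ν) • mp - (mm ⬝ᵥ ν) • mm) + (ρp2 - ρm2) • Λ⁻¹.mulVec ν = 0)
    (hjump : ρp2 ≠ ρm2) :
    ν ⬝ᵥ Λ⁻¹.mulVec ν = 0 := by
  have h3 := congrArg (fun w => ν ⬝ᵥ w) h2
  simp only [dotProduct_add, dotProduct_smul, dotProduct_sub, dotProduct_zero,
    smul_eq_mul, dotProduct_comm mp ν, dotProduct_comm mm ν, h1, nsmul_eq_mul,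
    Nat.cast_ofNat] at h3
  have h1' : ν ⬝ᵥ mp = ν ⬝ᵥ mm := by rw [dotProduct_comm, h1, dotProduct_comm]
  rw [h1'] at h3
  have hΔ : ρp2 - ρm2 ≠ 0 := sub_ne_zero.mpr hjump
  have : (ρp2 - ρm2) * (ν ⬝ᵥ Λ⁻¹.mulVec ν) = 0 := by linarith
  exact (mul_eq_zero.mp this).resolve_left hΔ
end

section
/- Let f : ℝ² → ℝ be continuously differentiable and define the Lagrangian density L : ℝ³ × ℝ³ → ℝ by L(E, B) = f( (|E|² − |B|²)/2 , E·B ). Set D := ∇_E L(E,B) and H := −∇_B L(E,B), and consider the 4×4 tensor T(E,B) with block structure: T₀₀ = L − E·D, T₀ⱼ = (H × E)ⱼ for j = 1,2,3, Tⱼ₀ = (D × B)ⱼ, and lower-right 3×3 block (L + B·H) I₃ − E ⊗ D − H ⊗ B. Then for every (E, B) ∈ ℝ³ × ℝ³ the matrix diag(−1, 1, 1, 1) · T(E,B) is symmetric; equivalently, D × B + H × E = 0 and E ⊗ D + H ⊗ B is a symmetric 3×3 matrix. -/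
/-!
Both Lorentz invariants are quadratic in `(E, B)`, so the chain rule gives the constitutive
relations `D = a E + b B` and `H = a B - b E`, where `a` and `b` are the partial derivatives of
`f` at the invariants. Hence `D × B + H × E = a (E × B + B × E) = 0` and
`E ⊗ D + H ⊗ B = a (E ⊗ E + B ⊗ B)`. These two facts are exactly the symmetry of
`diag(-1, 1, 1, 1) T`: its off-diagonal blocks are `-(H × E)` and `D × B`, and its spatial block
is `(L + B·H) I - (E ⊗ D + H ⊗ B)`.
-/

open Matrix
open scoped BigOperators

/-- The electromagnetic energy–momentum tensor of the second Variational Principle, indexed by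
`Fin 1 ⊕ Fin 3` (time index `Sum.inl 0`, space indices `Sum.inr j`). -/
noncomputable def Tem (L : (Fin 3 → ℝ) × (Fin 3 → ℝ) → ℝ)
    (E B D H : Fin 3 → ℝ) : Matrix (Fin 1 ⊕ Fin 3) (Fin 1 ⊕ Fin 3) ℝ :=
  Matrix.fromBlocks
    (Matrix.of fun _ _ : Fin 1 => L (E, B) - E ⬝ᵥ D)
    (Matrix.of fun _ j => crossProduct H E j)
    (Matrix.of fun i _ => crossProduct D B i)
    (Matrix.of fun i j =>
      (L (E, B) + B ⬝ᵥ H) * (if i = j then 1 else 0) - E i * D j - H i * B j)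

theorem HasFDerivAt.dotProduct {ι X : Type*} [Fintype ι] [NormedAddCommGroup X]
    [NormedSpace ℝ X] {u v : X → ι → ℝ} {u' v' : X →L[ℝ] ι → ℝ} {x : X}
    (hu : HasFDerivAt u u' x) (hv : HasFDerivAt v v' x) :
    HasFDerivAt (fun y => u y ⬝ᵥ v y)
      (∑ i, (u x i • (ContinuousLinearMap.proj i).comp v' +
        v x i • (ContinuousLinearMap.proj i).comp u')) x :=
  HasFDerivAt.fun_sum fun i _ =>
    (hasFDerivAt_pi'.1 hu i).mul (hasFDerivAt_pi'.1 hv i)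

theorem ContinuousLinearMap.map_real_prod {F : Type*} [NormedAddCommGroup F] [NormedSpace ℝ F]
    (φ : ℝ × ℝ →L[ℝ] F) (x y : ℝ) : φ (x, y) = x • φ (1, 0) + y • φ (0, 1) := by
  rw [← map_smul, ← map_smul, ← map_add]
  simp

section LorentzInvariants

variable {ι : Type*} [Fintype ι]

noncomputable def lorentzInvariants (p : (ι → ℝ) × (ι → ℝ)) : ℝ × ℝ :=
  ((p.1 ⬝ᵥ p.1 - p.2 ⬝ᵥ p.2) / 2, p.1 ⬝ᵥ p.2)

theorem fderiv_comp_lorentzInvariants_apply {f : ℝ × ℝ → ℝ} {p : (ι → ℝ) × (ι → ℝ)}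
    (hf : DifferentiableAt ℝ f (lorentzInvariants p)) (v : (ι → ℝ) × (ι → ℝ)) :
    fderiv ℝ (f ∘ lorentzInvariants) p v =
      fderiv ℝ f (lorentzInvariants p) (p.1 ⬝ᵥ v.1 - p.2 ⬝ᵥ v.2, p.1 ⬝ᵥ v.2 + p.2 ⬝ᵥ v.1) := by
  have hfst := (ContinuousLinearMap.fst ℝ (ι → ℝ) (ι → ℝ)).hasFDerivAt (x := p)
  have hsnd := (ContinuousLinearMap.snd ℝ (ι → ℝ) (ι → ℝ)).hasFDerivAt (x := p)
  have hinv : HasFDerivAt lorentzInvariants _ p :=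
    (((hfst.dotProduct hfst).sub (hsnd.dotProduct hsnd)).mul_const 2⁻¹).prodMk
      (hfst.dotProduct hsnd)
  rw [(hf.hasFDerivAt.comp p hinv).fderiv]
  simp only [ContinuousLinearMap.comp_apply, ContinuousLinearMap.prod_apply]
  congr 1
  ext
  · simp [dotProduct, Finset.sum_add_distrib]
    ring
  · simp [dotProduct, Finset.sum_add_distrib]

theorem fderiv_comp_lorentzInvariants_apply_single_zero [DecidableEq ι] {f : ℝ × ℝ → ℝ}
    {E B : ι → ℝ} (hf : DifferentiableAt ℝ f (lorentzInvariants (E, B))) (i : ι) :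
    fderiv ℝ (f ∘ lorentzInvariants) (E, B) (Pi.single i 1, 0) =
      fderiv ℝ f (lorentzInvariants (E, B)) (1, 0) * E i +
        fderiv ℝ f (lorentzInvariants (E, B)) (0, 1) * B i := by
  rw [fderiv_comp_lorentzInvariants_apply hf, ContinuousLinearMap.map_real_prod]
  simp [mul_comm]

theorem fderiv_comp_lorentzInvariants_apply_zero_single [DecidableEq ι] {f : ℝ × ℝ → ℝ}
    {E B : ι → ℝ} (hf : DifferentiableAt ℝ f (lorentzInvariants (E, B))) (i : ι) :
    fderiv ℝ (f ∘ lorentzInvariants) (E, B) (0, Pi.single i 1) =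
      fderiv ℝ f (lorentzInvariants (E, B)) (0, 1) * E i -
        fderiv ℝ f (lorentzInvariants (E, B)) (1, 0) * B i := by
  rw [fderiv_comp_lorentzInvariants_apply hf, ContinuousLinearMap.map_real_prod]
  simp only [dotProduct_single, dotProduct_zero, mul_one, zero_sub, add_zero, smul_eq_mul]
  ring

end LorentzInvariants

section Constitutive

variable {R : Type*} [CommRing R] {E B D H : Fin 3 → R} {a b : R}

theorem cross_add_cross_eq_zero_of_constitutive (hD : D = a • E + b • B)
    (hH : H = a • B - b • E) : D ⨯₃ B + H ⨯₃ E = 0 := by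
  simp [hD, hH, cross_self, ← smul_add, cross_anticomm']

theorem isSymm_outer_add_outer_of_constitutive (hD : D = a • E + b • B) (hH : H = a • B - b • E) :
    (Matrix.of fun i j : Fin 3 => E i * D j + H i * B j).IsSymm := by
  ext i j
  simp only [transpose_apply, of_apply, hD, hH, Pi.add_apply, Pi.sub_apply, Pi.smul_apply,
    smul_eq_mul]
  ring

end Constitutive

theorem isSymm_minkowski_mul_Tem (L : (Fin 3 → ℝ) × (Fin 3 → ℝ) → ℝ) {E B D H : Fin 3 → ℝ}
    (hcross : D ⨯₃ B + H ⨯₃ E = 0)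
    (hsymm : (Matrix.of fun i j : Fin 3 => E i * D j + H i * B j).IsSymm) :
    (Matrix.diagonal (Sum.elim (fun _ : Fin 1 => (-1 : ℝ)) fun _ : Fin 3 => 1)
      * Tem L E B D H).IsSymm := by
  rw [← fromBlocks_diagonal, Tem, fromBlocks_multiply]
  simp only [diagonal_one, Matrix.one_mul, Matrix.zero_mul, add_zero, zero_add]
  have hDB : crossProduct D B = -crossProduct H E := eq_neg_of_add_eq_zero_left hcross
  refine .fromBlocks ?_ ?_ ?_
  · ext i j
    rw [Subsingleton.elim i j, transpose_apply]
  · ext i j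
    simp [hDB]
  · ext i j
    have hij := congrFun₂ hsymm i j
    simp only [transpose_apply, of_apply] at hij ⊢
    by_cases h : i = j
    · simp [h]
    · simp only [h, Ne.symm h, if_false]
      linarith

/-- for a Lorentz-invariant Lagrangian `L(E,B) = f((|E|²−|B|²)/2, E·B)`, with
`D = ∇_E L` and `H = −∇_B L`, the tensor `diag(−1,1,1,1)·T` is symmetric; equivalently
`D × B + H × E = 0` and `E ⊗ D + H ⊗ B` is symmetric. -/
theorem stmt12 (f : ℝ × ℝ → ℝ) (hf : ContDiff ℝ 1 f)
    (L : (Fin 3 → ℝ) × (Fin 3 → ℝ) → ℝ)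
    (hL : ∀ E B : Fin 3 → ℝ,
      L (E, B) = f (((∑ i, E i ^ 2) - ∑ i, B i ^ 2) / 2, E ⬝ᵥ B)) :
    ∀ E B : Fin 3 → ℝ,
      ∀ D H : Fin 3 → ℝ,
      (∀ i, D i = fderiv ℝ L (E, B) (Pi.single i 1, 0)) →
      (∀ i, H i = -fderiv ℝ L (E, B) (0, Pi.single i 1)) →
      ((Matrix.diagonal (Sum.elim (fun _ : Fin 1 => (-1 : ℝ)) fun _ : Fin 3 => 1)
          * Tem L E B D H).IsSymm ∧
        crossProduct D B + crossProduct H E = 0 ∧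
        (Matrix.of fun i j : Fin 3 => E i * D j + H i * B j).IsSymm) := by
  intro E B D H hD hH
  have hLf : L = f ∘ lorentzInvariants := funext fun p => by
    simp [hL, lorentzInvariants, dotProduct, sq]
  have hfd : DifferentiableAt ℝ f (lorentzInvariants (E, B)) :=
    (hf.differentiable one_ne_zero).differentiableAt
  set a := fderiv ℝ f (lorentzInvariants (E, B)) (1, 0)
  set b := fderiv ℝ f (lorentzInvariants (E, B)) (0, 1)
  have hD' : D = a • E + b • B := funext fun i => by
    rw [hD i, hLf, fderiv_comp_lorentzInvariants_apply_single_zero hfd]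
    rfl
  have hH' : H = a • B - b • E := funext fun i => by
    rw [hH i, hLf, fderiv_comp_lorentzInvariants_apply_zero_single hfd, neg_sub]
    rfl
  have hcross := cross_add_cross_eq_zero_of_constitutive hD' hH'
  have hsymm := isSymm_outer_add_outer_of_constitutive hD' hH'
  exact ⟨isSymm_minkowski_mul_Tem L hcross hsymm, hcross, hsymm⟩
end

section
/- Let Ω ⊆ ℝ × ℝ³ be open, L : ℝ³ × ℝ³ → ℝ twice continuously differentiable, and let E, B : Ω → ℝ³ be continuously differentiable fields. Set D(t,x) := ∇_E L(E(t,x), B(t,x)) and H(t,x) := −∇_B L(E(t,x), B(t,x)). Assume on Ω the Gauß–Faraday law ∂_t B + curl_x E = 0, div_x B = 0, and the Maxwell–Ampère law ∂_t D − curl_x H = 0, div_x D = 0. Then the 4×4 tensor T with first row (L − E·D, (H×E)ᵀ), first column below the corner D×B, and lower-right block (L + B·H) I₃ − E ⊗ D − H ⊗ B is divergence-free on Ω: ∂_t(L − E·D) + div_x(H × E) = 0, and for i = 1,2,3, ∂_t (D × B)_i + ∑_{j=1}^3 ∂_j [ (L + B·H) δ_{ij} − E_i D_j − H_i B_j ]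 = 0. -/
/-!
Only first derivatives of the fields enter. By the chain rule `∂(L(E, B)) = ∂E ⬝ D - ∂B ⬝ H`,
so after the product rule every component of `Div T` is bilinear in the fields and their first
derivatives. Poynting's theorem then reduces to `div (H × E) = E ⬝ curl H - H ⬝ curl E` and
conservation of momentum to `F × curl G = (∇G)ᵀ F - (F ⬝ ∇) G`, applied to `(D, E)` and `(B, H)`,
once `∂_t B = -curl E` and `∂_t D = curl H` are substituted and `div D = div B = 0` are used.
-/


open Matrix
open scoped BigOperators

/-- Time partial derivative of a scalar function on spacetime `ℝ × ℝ³`. -/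
noncomputable def pt (f : ℝ × (Fin 3 → ℝ) → ℝ) (p : ℝ × (Fin 3 → ℝ)) : ℝ :=
  fderiv ℝ f p (1, 0)

/-- Spatial partial derivative `∂_j` of a scalar function on spacetime `ℝ × ℝ³`. -/
noncomputable def px (j : Fin 3) (f : ℝ × (Fin 3 → ℝ) → ℝ) (p : ℝ × (Fin 3 → ℝ)) : ℝ :=
  fderiv ℝ f p (0, Pi.single j 1)

/-- Spatial curl of a vector field on spacetime. -/
noncomputable def curl3 (F : ℝ × (Fin 3 → ℝ) → (Fin 3 → ℝ)) (p : ℝ × (Fin 3 → ℝ)) :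
    Fin 3 → ℝ :=
  ![px 1 (fun z => F z 2) p - px 2 (fun z => F z 1) p,
    px 2 (fun z => F z 0) p - px 0 (fun z => F z 2) p,
    px 0 (fun z => F z 1) p - px 1 (fun z => F z 0) p]

section ProductRule

variable {𝕜 X U V W : Type*} [NontriviallyNormedField 𝕜] [CompleteSpace 𝕜]
  [NormedAddCommGroup X] [NormedSpace 𝕜 X]
  [NormedAddCommGroup U] [NormedSpace 𝕜 U] [FiniteDimensional 𝕜 U]
  [NormedAddCommGroup V] [NormedSpace 𝕜 V] [FiniteDimensional 𝕜 V]
  [NormedAddCommGroup W] [NormedSpace 𝕜 W] {p : X}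

theorem LinearMap.fderiv_apply₂_apply (β : U →ₗ[𝕜] V →ₗ[𝕜] W) {F : X → U} {G : X → V}
    (hF : DifferentiableAt 𝕜 F p) (hG : DifferentiableAt 𝕜 G p) (v : X) :
    fderiv 𝕜 (fun z => β (F z) (G z)) p v
      = β (fderiv 𝕜 F p v) (G p) + β (F p) (fderiv 𝕜 G p v) := by
  have h := β.toContinuousBilinearMap.fderiv_of_bilinear hF hG
  simp only [LinearMap.toContinuousBilinearMap_apply] at h
  simp [h, add_comm]

theorem LinearMap.differentiableAt_apply₂ (β : U →ₗ[𝕜] V →ₗ[𝕜] W) {F : X → U} {G : X → V}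
    (hF : DifferentiableAt 𝕜 F p) (hG : DifferentiableAt 𝕜 G p) :
    DifferentiableAt 𝕜 (fun z => β (F z) (G z)) p :=
  (β.toContinuousBilinearMap.hasFDerivAt_of_bilinear hF.hasFDerivAt hG.hasFDerivAt).differentiableAt

theorem fderiv_mul_apply {F G : X → 𝕜} (hF : DifferentiableAt 𝕜 F p)
    (hG : DifferentiableAt 𝕜 G p) (v : X) :
    fderiv 𝕜 (fun z => F z * G z) p v = fderiv 𝕜 F p v * G p + F p * fderiv 𝕜 G p v :=
  (LinearMap.mul 𝕜 𝕜).fderiv_apply₂_apply hF hG v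

theorem fderiv_dotProduct_apply {n : ℕ} {F G : X → Fin n → 𝕜} (hF : DifferentiableAt 𝕜 F p)
    (hG : DifferentiableAt 𝕜 G p) (v : X) :
    fderiv 𝕜 (fun z => F z ⬝ᵥ G z) p v = fderiv 𝕜 F p v ⬝ᵥ G p + F p ⬝ᵥ fderiv 𝕜 G p v :=
  (dotProductBilin 𝕜 𝕜).fderiv_apply₂_apply hF hG v

theorem fderiv_cross_apply {F G : X → Fin 3 → 𝕜} (hF : DifferentiableAt 𝕜 F p)
    (hG : DifferentiableAt 𝕜 G p) (v : X) :
    fderiv 𝕜 (fun z => F z ⨯₃ G z) p v = fderiv 𝕜 F p v ⨯₃ G p + F p ⨯₃ fderiv 𝕜 G p v :=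
  crossProduct.fderiv_apply₂_apply hF hG v

end ProductRule

theorem fderiv_component_apply {𝕜 X ι : Type*} [NontriviallyNormedField 𝕜]
    [NormedAddCommGroup X] [NormedSpace 𝕜 X] [Fintype ι] {F : X → ι → 𝕜} {p : X}
    (hF : DifferentiableAt 𝕜 F p) (i : ι) (v : X) :
    fderiv 𝕜 (fun z => F z i) p v = fderiv 𝕜 F p v i := by
  rw [fderiv_apply hF i]
  rfl

theorem ContinuousLinearMap.apply_prod_eq_dotProduct {𝕜 : Type*} [NontriviallyNormedField 𝕜]
    {n : ℕ}
    (ℓ : (Fin n → 𝕜) × (Fin n → 𝕜) →L[𝕜] 𝕜) (u w : Fin n → 𝕜) :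
    ℓ (u, w) = u ⬝ᵥ (fun i => ℓ (Pi.single i 1, 0)) + w ⬝ᵥ (fun i => ℓ (0, Pi.single i 1)) := by
  have hsum : ((u, w) : (Fin n → 𝕜) × (Fin n → 𝕜))
      = ∑ i, (u i • (Pi.single i 1, 0) + w i • (0, Pi.single i 1)) := by
    ext j <;> simp [Prod.fst_sum, Prod.snd_sum, Finset.sum_apply, Pi.single_apply]
  rw [hsum, map_sum]
  simp only [map_add, map_smul, smul_eq_mul, dotProduct, Finset.sum_add_distrib]

theorem fderiv_comp_prodMk_apply {𝕜 X : Type*} [NontriviallyNormedField 𝕜]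
    [NormedAddCommGroup X] [NormedSpace 𝕜 X] {n : ℕ}
    {L : (Fin n → 𝕜) × (Fin n → 𝕜) → 𝕜} {E B : X → Fin n → 𝕜} {p : X}
    (hL : DifferentiableAt 𝕜 L (E p, B p)) (hE : DifferentiableAt 𝕜 E p)
    (hB : DifferentiableAt 𝕜 B p) (v : X) :
    fderiv 𝕜 (fun z => L (E z, B z)) p v
      = fderiv 𝕜 E p v ⬝ᵥ (fun i => fderiv 𝕜 L (E p, B p) (Pi.single i 1, 0))
        + fderiv 𝕜 B p v ⬝ᵥ (fun i => fderiv 𝕜 L (E p, B p) (0, Pi.single i 1)) := by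
  rw [fderiv_fun_comp p hL (hE.prodMk hB), ContinuousLinearMap.comp_apply,
    DifferentiableAt.fderiv_prodMk hE hB, ContinuousLinearMap.prod_apply,
    ContinuousLinearMap.apply_prod_eq_dotProduct]

noncomputable def vpt (F : ℝ × (Fin 3 → ℝ) → Fin 3 → ℝ) (p : ℝ × (Fin 3 → ℝ)) : Fin 3 → ℝ :=
  fderiv ℝ F p (1, 0)

noncomputable def vpx (j : Fin 3) (F : ℝ × (Fin 3 → ℝ) → Fin 3 → ℝ) (p : ℝ × (Fin 3 → ℝ)) :
    Fin 3 → ℝ :=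
  fderiv ℝ F p (0, Pi.single j 1)

/-- The curl of a field `F` from its Jacobian, indexed as `J j i = ∂_j F_i`. -/
def curl {R : Type*} [Ring R] (J : Fin 3 → Fin 3 → R) : Fin 3 → R :=
  ![J 1 2 - J 2 1, J 2 0 - J 0 2, J 0 1 - J 1 0]

section Spacetime

variable {F : ℝ × (Fin 3 → ℝ) → Fin 3 → ℝ} {p : ℝ × (Fin 3 → ℝ)}

theorem pt_apply (hF : DifferentiableAt ℝ F p) (i : Fin 3) :
    pt (fun z => F z i) p = vpt F p i :=
  fderiv_component_apply hF i _

theorem px_apply (hF : DifferentiableAt ℝ F p) (j i : Fin 3) :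
    px j (fun z => F z i) p = vpx j F p i :=
  fderiv_component_apply hF i _

theorem curl3_eq_curl (hF : DifferentiableAt ℝ F p) : curl3 F p = curl (vpx · F p) := by
  simp only [curl3, curl, px_apply hF]

end Spacetime

section VectorCalculus

variable {R : Type*} [CommRing R]

theorem sum_apply_cross_add_cross (F G : Fin 3 → R) (J K : Fin 3 → Fin 3 → R) :
    ∑ j, (J j ⨯₃ G + F ⨯₃ K j) j = G ⬝ᵥ curl J - F ⬝ᵥ curl K := by
  simp only [cross_apply, curl, dotProduct, Pi.add_apply, Fin.sum_univ_three, cons_val_zero,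
    cons_val_one, cons_val]
  ring

theorem cross_curl_apply (F : Fin 3 → R) (K : Fin 3 → Fin 3 → R) (i : Fin 3) :
    (F ⨯₃ curl K) i = F ⬝ᵥ K i - ∑ j, K j i * F j := by
  fin_cases i <;>
    simp only [cross_apply, curl, dotProduct, Fin.sum_univ_three, cons_val_zero, cons_val_one,
      cons_val, Fin.zero_eta, Fin.mk_one, Fin.reduceFinMk] <;>
    ring

end VectorCalculus

section Pointwise

variable {L : (Fin 3 → ℝ) × (Fin 3 → ℝ) → ℝ} {E B D H : ℝ × (Fin 3 → ℝ) → Fin 3 → ℝ}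
  {p : ℝ × (Fin 3 → ℝ)}

theorem vpt_eq_neg_curl (hB : DifferentiableAt ℝ B p) (hE : DifferentiableAt ℝ E p)
    (hGF : ∀ i, pt (fun z => B z i) p + curl3 E p i = 0) : vpt B p = -curl (vpx · E p) := by
  funext i
  simpa [pt_apply hB, curl3_eq_curl hE, eq_neg_iff_add_eq_zero] using hGF i

theorem vpt_eq_curl (hD : DifferentiableAt ℝ D p) (hH : DifferentiableAt ℝ H p)
    (hMA : ∀ i, pt (fun z => D z i) p - curl3 H p i = 0) : vpt D p = curl (vpx · H p) := by
  funext i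
  simpa [pt_apply hD, curl3_eq_curl hH, sub_eq_zero] using hMA i

theorem fderiv_lagrangian_apply (hL : DifferentiableAt ℝ L (E p, B p))
    (hE : DifferentiableAt ℝ E p) (hB : DifferentiableAt ℝ B p)
    (hD : ∀ i, D p i = fderiv ℝ L (E p, B p) (Pi.single i 1, 0))
    (hH : ∀ i, H p i = -fderiv ℝ L (E p, B p) (0, Pi.single i 1)) (v : ℝ × (Fin 3 → ℝ)) :
    fderiv ℝ (fun z => L (E z, B z)) p v = fderiv ℝ E p v ⬝ᵥ D p - fderiv ℝ B p v ⬝ᵥ H p := by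
  have hH' : (fun i => fderiv ℝ L (E p, B p) (0, Pi.single i 1)) = -H p := by
    funext i; simp [hH]
  rw [fderiv_comp_prodMk_apply hL hE hB, hH', ← funext hD, dotProduct_neg, sub_eq_add_neg]

theorem poynting_at (hL : DifferentiableAt ℝ L (E p, B p)) (hE : DifferentiableAt ℝ E p)
    (hB : DifferentiableAt ℝ B p) (hD : DifferentiableAt ℝ D p) (hH : DifferentiableAt ℝ H p)
    (hDp : ∀ i, D p i = fderiv ℝ L (E p, B p) (Pi.single i 1, 0))
    (hHp : ∀ i, H p i = -fderiv ℝ L (E p, B p) (0, Pi.single i 1))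
    (hFaraday : vpt B p = -curl (vpx · E p)) (hAmpere : vpt D p = curl (vpx · H p)) :
    pt (fun z => L (E z, B z) - E z ⬝ᵥ D z) p + ∑ j, px j (fun z => (H z ⨯₃ E z) j) p = 0 := by
  have hHE := crossProduct.differentiableAt_apply₂ hH hE
  have hdiv : ∑ j, px j (fun z => (H z ⨯₃ E z) j) p
      = E p ⬝ᵥ curl (vpx · H p) - H p ⬝ᵥ curl (vpx · E p) := by
    simp only [px_apply hHE, vpx, fderiv_cross_apply hH hE]
    exact sum_apply_cross_add_cross _ _ _ _
  have hLEB : DifferentiableAt ℝ (fun z => L (E z, B z)) p := hL.comp p (hE.prodMk hB)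
  have hED : DifferentiableAt ℝ (fun z => E z ⬝ᵥ D z) p :=
    (dotProductBilin ℝ ℝ).differentiableAt_apply₂ hE hD
  rw [hdiv, pt, fderiv_fun_sub hLEB hED, _root_.sub_apply,
    fderiv_lagrangian_apply hL hE hB hDp hHp, fderiv_dotProduct_apply hE hD]
  rw [vpt] at hFaraday hAmpere
  rw [hFaraday, hAmpere, neg_dotProduct, dotProduct_comm _ (H p)]
  ring

theorem momentum_at (hL : DifferentiableAt ℝ L (E p, B p)) (hE : DifferentiableAt ℝ E p)
    (hB : DifferentiableAt ℝ B p) (hD : DifferentiableAt ℝ D p) (hH : DifferentiableAt ℝ H p)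
    (hDp : ∀ i, D p i = fderiv ℝ L (E p, B p) (Pi.single i 1, 0))
    (hHp : ∀ i, H p i = -fderiv ℝ L (E p, B p) (0, Pi.single i 1))
    (hFaraday : vpt B p = -curl (vpx · E p)) (hdivB : ∑ j, vpx j B p j = 0)
    (hAmpere : vpt D p = curl (vpx · H p)) (hdivD : ∑ j, vpx j D p j = 0) (i : Fin 3) :
    pt (fun z => (D z ⨯₃ B z) i) p
      + ∑ j, px j (fun z => (L (E z, B z) + B z ⬝ᵥ H z) * (if i = j then 1 else 0)
          - E z i * D z j - H z i * B z j) p = 0 := by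
  have hLEB : DifferentiableAt ℝ (fun z => L (E z, B z)) p := hL.comp p (hE.prodMk hB)
  have hBH : DifferentiableAt ℝ (fun z => B z ⬝ᵥ H z) p :=
    (dotProductBilin ℝ ℝ).differentiableAt_apply₂ hB hH
  have hcomp {F : ℝ × (Fin 3 → ℝ) → Fin 3 → ℝ} (hF : DifferentiableAt ℝ F p) (k : Fin 3) :
      DifferentiableAt ℝ (fun z => F z k) p :=
    differentiableAt_pi.1 hF k
  have hLBH : DifferentiableAt ℝ (fun z => L (E z, B z) + B z ⬝ᵥ H z) p := hLEB.add hBH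
  -- the `B ⬝ᵥ H` term cancels the magnetic part of `∂ L`
  have henergy (v : ℝ × (Fin 3 → ℝ)) : fderiv ℝ (fun z => L (E z, B z) + B z ⬝ᵥ H z) p v
      = fderiv ℝ E p v ⬝ᵥ D p + B p ⬝ᵥ fderiv ℝ H p v := by
    rw [fderiv_fun_add hLEB hBH, _root_.add_apply, fderiv_lagrangian_apply hL hE hB hDp hHp,
      fderiv_dotProduct_apply hB hH]
    ring
  have hstress (j : Fin 3) :
      px j (fun z => (L (E z, B z) + B z ⬝ᵥ H z) * (if i = j then 1 else 0)
          - E z i * D z j - H z i * B z j) p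
        = (if i = j then 1 else 0) * (vpx j E p ⬝ᵥ D p + B p ⬝ᵥ vpx j H p)
          - (vpx j E p i * D p j + E p i * vpx j D p j)
          - (vpx j H p i * B p j + H p i * vpx j B p j) := by
    have hA : DifferentiableAt ℝ
        (fun z => (L (E z, B z) + B z ⬝ᵥ H z) * (if i = j then 1 else 0)) p :=
      hLBH.mul_const _
    have hED : DifferentiableAt ℝ (fun z => E z i * D z j) p := (hcomp hE i).fun_mul (hcomp hD j)
    have hHB : DifferentiableAt ℝ (fun z => H z i * B z j) p := (hcomp hH i).fun_mul (hcomp hB j)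
    rw [px, fderiv_fun_sub (hA.fun_sub hED) hHB, _root_.sub_apply, fderiv_fun_sub hA hED,
      _root_.sub_apply, fderiv_mul_const hLBH, fderiv_mul_apply (hcomp hE i) (hcomp hD j),
      fderiv_mul_apply (hcomp hH i) (hcomp hB j), fderiv_component_apply hE,
      fderiv_component_apply hD, fderiv_component_apply hH, fderiv_component_apply hB]
    simp only [_root_.smul_apply, henergy, smul_eq_mul, vpx]
  have hDB := crossProduct.differentiableAt_apply₂ hD hB
  rw [pt_apply hDB, vpt, fderiv_cross_apply hD hB, ← vpt, ← vpt, hFaraday, hAmpere,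
    Finset.sum_congr rfl fun j _ => hstress j]
  simp only [Finset.sum_sub_distrib, Finset.sum_add_distrib, ite_mul, one_mul, zero_mul,
    Finset.sum_ite_eq, Finset.mem_univ, if_true, ← Finset.mul_sum, hdivB, hdivD, mul_zero,
    add_zero]
  rw [← cross_anticomm (B p), map_neg, Pi.add_apply, Pi.neg_apply, Pi.neg_apply,
    cross_curl_apply, cross_curl_apply, dotProduct_comm (vpx i E p)]
  ring

end Pointwise

/-- for `C¹` fields satisfying the Gauß–Faraday and Maxwell–Ampère laws, the
electromagnetic tensor `T` (first row `(L − E·D, (H×E)ᵀ)`, first column `D×B`, lower-right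
block `(L + B·H)I₃ − E⊗D − H⊗B`) is divergence-free: Poynting's theorem and conservation of
momentum hold. -/
theorem stmt13 (Ω : Set (ℝ × (Fin 3 → ℝ))) (hΩ : IsOpen Ω)
    (L : (Fin 3 → ℝ) × (Fin 3 → ℝ) → ℝ) (hL : ContDiff ℝ 2 L)
    (E B : ℝ × (Fin 3 → ℝ) → (Fin 3 → ℝ))
    (hE : ContDiffOn ℝ 1 E Ω) (hB : ContDiffOn ℝ 1 B Ω)
    (D H : ℝ × (Fin 3 → ℝ) → (Fin 3 → ℝ))
    (hD : ∀ p i, D p i = fderiv ℝ L (E p, B p) (Pi.single i 1, 0))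
    (hH : ∀ p i, H p i = -fderiv ℝ L (E p, B p) (0, Pi.single i 1))
    -- Gauß–Faraday law
    (hGF : ∀ p ∈ Ω, ∀ i, pt (fun z => B z i) p + curl3 E p i = 0)
    (hdivB : ∀ p ∈ Ω, ∑ j, px j (fun z => B z j) p = 0)
    -- Maxwell–Ampère law
    (hMA : ∀ p ∈ Ω, ∀ i, pt (fun z => D z i) p - curl3 H p i = 0)
    (hdivD : ∀ p ∈ Ω, ∑ j, px j (fun z => D z j) p = 0) :
    -- Poynting's theorem (first row of Div T = 0)
    (∀ p ∈ Ω,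
      pt (fun z => L (E z, B z) - E z ⬝ᵥ D z) p
        + ∑ j, px j (fun z => crossProduct (H z) (E z) j) p = 0) ∧
    -- conservation of momentum (spatial rows of Div T = 0)
    (∀ p ∈ Ω, ∀ i : Fin 3,
      pt (fun z => crossProduct (D z) (B z) i) p
        + ∑ j, px j (fun z =>
            (L (E z, B z) + B z ⬝ᵥ H z) * (if i = j then 1 else 0)
              - E z i * D z j - H z i * B z j) p = 0) := by
  have hLd := hL.differentiable two_ne_zero
  have hL' : Differentiable ℝ (fderiv ℝ L) :=
    (hL.fderiv_right (m := 1) le_rfl).differentiable one_ne_zero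
  have hDeq : D = fun z i => fderiv ℝ L (E z, B z) (Pi.single i 1, 0) :=
    funext fun z => funext (hD z)
  have hHeq : H = fun z i => -fderiv ℝ L (E z, B z) (0, Pi.single i 1) :=
    funext fun z => funext (hH z)
  have hdiff (p) (hp : p ∈ Ω) : DifferentiableAt ℝ E p ∧ DifferentiableAt ℝ B p ∧
      DifferentiableAt ℝ D p ∧ DifferentiableAt ℝ H p := by
    have hEp := (hE.differentiableOn one_ne_zero).differentiableAt (hΩ.mem_nhds hp)
    have hBp := (hB.differentiableOn one_ne_zero).differentiableAt (hΩ.mem_nhds hp)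
    refine ⟨hEp, hBp, ?_, ?_⟩
    · rw [hDeq]; fun_prop
    · rw [hHeq]; fun_prop
  refine ⟨fun p hp => ?_, fun p hp i => ?_⟩ <;> obtain ⟨hEp, hBp, hDp, hHp⟩ := hdiff p hp
  · exact poynting_at (hLd _) hEp hBp hDp hHp (hD p) (hH p)
      (vpt_eq_neg_curl hBp hEp (hGF p hp)) (vpt_eq_curl hDp hHp (hMA p hp))
  · exact momentum_at (hLd _) hEp hBp hDp hHp (hD p) (hH p)
      (vpt_eq_neg_curl hBp hEp (hGF p hp)) (by simpa only [px_apply hBp] using hdivB p hp)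
      (vpt_eq_curl hDp hHp (hMA p hp)) (by simpa only [px_apply hDp] using hdivD p hp) i
end
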